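/- arXiv:2412.05162 — 6 statements merged into one kernel-verified Lean document; each statement's English description precedes it below -/
import Mathlib

section
/- Let (S, →, s_init, Bad) be a transition system and let →_1, …, →_k be relations on S with → = ⋃_{i=1}^k →_i. Then Bad is reachable from s_init in (S, →) if and only if the set {(s, j) | s ∈ Bad, 0 ≤ j ≤ k} is reachable from (s_init, 0) in the scheduled system. (Soundness of the scheduler transformation.) -/
/-- The transition relation of the scheduled system: states are pairs of a
state of the original system and a mode (`none` = mode 0, `some i` = mode i).
From `(s, 0)` the scheduler may select any relation index `i` such that `s`
has at least one `→ᵢ`-successor; from `(s, i)` the system performs an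
`→ᵢ`-step back to mode 0. -/
def schedStep {S : Type*} {k : ℕ} (rels : Fin k → S → S → Prop) :
    S × Option (Fin k) → S × Option (Fin k) → Prop :=
  fun p q =>
    match p, q with
    | (s, none), (t, some i) => t = s ∧ ∃ u, rels i s u
    | (s, some i), (t, none) => rels i s t
    | _, _ => False

/-!
A step `s →ᵢ t` is simulated by the two scheduled steps `(s, 0) → (s, i) → (t, 0)`.
Conversely, projecting a scheduled run to its first component gives a run of `→`:
mode selections project to stuttering steps, and the remaining steps are `→ᵢ`-steps.
-/

open Relation

namespace schedStep

variable {S : Type*} {k : ℕ} {rels : Fin k → S → S → Prop}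

theorem reflTransGen_of_rel {i : Fin k} {s t : S} (h : rels i s t) :
    ReflTransGen (schedStep rels) (s, none) (t, none) :=
  (ReflTransGen.single (show schedStep rels (s, none) (s, some i) from ⟨rfl, t, h⟩)).tail h

theorem reflGen_fst {p q : S × Option (Fin k)} (h : schedStep rels p q) :
    ReflGen (fun s t => ∃ i, rels i s t) p.1 q.1 := by
  obtain ⟨s, _ | i⟩ := p <;> obtain ⟨t, _ | j⟩ := q
  · exact h.elim
  · exact h.1 ▸ ReflGen.refl
  · exact ReflGen.single ⟨i, h⟩
  · exact h.elim

theorem reflTransGen_of_reflTransGen_union {s t : S}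
    (h : ReflTransGen (fun s t => ∃ i, rels i s t) s t) :
    ReflTransGen (schedStep rels) (s, none) (t, none) :=
  h.lift' (fun s => (s, none)) fun _ _ ⟨_, hi⟩ => reflTransGen_of_rel hi

theorem reflTransGen_union_fst {p q : S × Option (Fin k)}
    (h : ReflTransGen (schedStep rels) p q) :
    ReflTransGen (fun s t => ∃ i, rels i s t) p.1 q.1 :=
  reflTransGen_reflGen ▸ h.lift Prod.fst fun _ _ => reflGen_fst

end schedStep

/-- **Soundness of the scheduler transformation.** If `→ = ⋃ᵢ →ᵢ`, then `Bad`
is reachable from `s_init` in the original system iff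
`{(s, j) | s ∈ Bad}` is reachable from `(s_init, 0)` in the scheduled system. -/
theorem scheduler_soundness {S : Type*} {k : ℕ} (rels : Fin k → S → S → Prop)
    (step : S → S → Prop) (hstep : ∀ s t, step s t ↔ ∃ i, rels i s t)
    (sinit : S) (Bad : Set S) :
    (∃ s ∈ Bad, Relation.ReflTransGen step sinit s) ↔
      (∃ s ∈ Bad, ∃ m : Option (Fin k),
        Relation.ReflTransGen (schedStep rels) (sinit, none) (s, m)) := by
  obtain rfl : step = fun s t => ∃ i, rels i s t := by
    ext s t
    exact hstep s t
  constructor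
  · rintro ⟨s, hs, hreach⟩
    exact ⟨s, hs, none, schedStep.reflTransGen_of_reflTransGen_union hreach⟩
  · rintro ⟨s, hs, m, hreach⟩
    exact ⟨s, hs, schedStep.reflTransGen_union_fst hreach⟩
end

section
/- Let (S, →, s_init, Bad) be a transition system and let →_1, …, →_k be relations on S with → = ⋃_{i=1}^k →_i. If → is serial (every state of S has at least one →-successor), then every state of the scheduled system that is reachable from (s_init, 0) has at least one →'-successor; i.e., the scheduler transformation introduces no new deadlocks on reachable states. -/
namespace Scheduler

variable {S : Type*} {k : ℕ} {rels : Fin k → S → S → Prop}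

theorem exists_schedStep_none {s : S} (h : ∃ i t, rels i s t) :
    ∃ q, schedStep rels (s, none) q := by
  obtain ⟨i, t, hi⟩ := h
  exact ⟨(s, some i), rfl, t, hi⟩

theorem exists_schedStep_some_of_schedStep {p : S × Option (Fin k)} {t : S} {i : Fin k}
    (h : schedStep rels p (t, some i)) : ∃ q, schedStep rels (t, some i) q := by
  obtain ⟨s, _ | _⟩ := p
  · obtain ⟨rfl, u, hu⟩ := h
    exact ⟨(u, none), hu⟩
  · exact h.elim

theorem exists_schedStep_of_schedStep (hserial : ∀ s, ∃ i t, rels i s t)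
    {p q : S × Option (Fin k)} (h : schedStep rels p q) : ∃ r, schedStep rels q r := by
  obtain ⟨t, _ | i⟩ := q
  · exact exists_schedStep_none (hserial t)
  · exact exists_schedStep_some_of_schedStep h

end Scheduler

open Scheduler in
/-- **The scheduler transformation introduces no new deadlocks.** If
`→ = ⋃ᵢ →ᵢ` is serial, then every state of the scheduled system reachable
from `(s_init, 0)` has at least one successor. -/
theorem scheduler_no_new_deadlocks {S : Type*} {k : ℕ}
    (rels : Fin k → S → S → Prop)
    (step : S → S → Prop) (hstep : ∀ s t, step s t ↔ ∃ i, rels i s t)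
    (hserial : ∀ s : S, ∃ t, step s t) (sinit : S) :
    ∀ p : S × Option (Fin k),
      Relation.ReflTransGen (schedStep rels) (sinit, none) p →
      ∃ q, schedStep rels p q := by
  have hrels_serial : ∀ s, ∃ i t, rels i s t := fun s => by
    obtain ⟨t, ht⟩ := hserial s
    obtain ⟨i, hi⟩ := (hstep s t).mp ht
    exact ⟨i, t, hi⟩
  intro p hp
  cases hp with
  | refl => exact exists_schedStep_none (hrels_serial sinit)
  | tail _ hlast => exact exists_schedStep_of_schedStep hrels_serial hlast
end

section
/- Let (S, T, s_init, Bad) be a labeled transition system over a finite action set Act such that Act(s) ≠ ∅ for every s ∈ S, and fix for each s a duplicate-free list L(s) enumerating Act(s). Then Bad is reachable from s_init in the original system (where s → t iff (s, a, t) ∈ T for some a) if and only if the set {First(s) | s ∈ Bad} is reachable from First(s_init) in the action-separated system. (Soundness of the action-separation transformation.) -/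
/-- States of the action-separated system: question states `(s, a, ?)`,
commit states `(s, a, !)`, and demonic states `s_X`. -/
inductive SepState (S Act : Type*) where
  | question : S → Act → SepState S Act
  | commit : S → Act → SepState S Act
  | demonic : S → SepState S Act

variable {S Act : Type*}

/-- `First(s)`: the question state of the first action in the list `L s`. -/
def SepFirst (L : S → List Act) (hL : ∀ s, L s ≠ []) (s : S) : SepState S Act :=
  SepState.question s ((L s).head (hL s))

/-- `Next(s, a)`: the question state of the action following `a` in `L s`,
or the demonic state `s_X` if `a` is the last action of `L s`. -/
def SepNext [DecidableEq Act] (L : S → List Act) (s : S) (a : Act) :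
    SepState S Act :=
  if h : (L s).idxOf a + 1 < (L s).length then
    SepState.question s ((L s).get ⟨(L s).idxOf a + 1, h⟩)
  else SepState.demonic s

/-- The transition relation `→'` of the action-separated system. -/
inductive SepStep [DecidableEq Act] (T : S → Act → S → Prop)
    (L : S → List Act) (hL : ∀ s, L s ≠ []) :
    SepState S Act → SepState S Act → Prop where
  | enable (s : S) (a : Act) (ha : a ∈ L s) :
      SepStep T L hL (SepState.question s a) (SepState.commit s a)
  | skip (s : S) (a : Act) (ha : a ∈ L s) :
      SepStep T L hL (SepState.question s a) (SepNext L s a)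
  | take (s : S) (a : Act) (t : S) (ha : a ∈ L s) (h : T s a t) :
      SepStep T L hL (SepState.commit s a) (SepFirst L hL t)
  | pass (s : S) (a : Act) (ha : a ∈ L s) :
      SepStep T L hL (SepState.commit s a) (SepNext L s a)
  | demonic (s t : S) (a : Act) (h : T s a t) :
      SepStep T L hL (SepState.demonic s) (SepFirst L hL t)

/-- **Soundness of the action-separation transformation.** Let `(S, T)` be a
labeled transition system over a finite action set with `Act(s) ≠ ∅` for
every state `s`, and let `L s` be a duplicate-free list enumerating `Act(s)`.
Then `Bad` is reachable from `s_init` in the original system iff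
`{First(s) | s ∈ Bad}` is reachable from `First(s_init)` in the
action-separated system. -/
theorem action_separation_soundness [Fintype Act] [DecidableEq Act]
    (T : S → Act → S → Prop) (L : S → List Act) (hL : ∀ s, L s ≠ [])
    (hnodup : ∀ s, (L s).Nodup)
    (henum : ∀ s a, a ∈ L s ↔ ∃ t, T s a t)
    (sinit : S) (Bad : Set S) :
    (∃ s ∈ Bad, Relation.ReflTransGen (fun s t => ∃ a, T s a t) sinit s) ↔
      (∃ s ∈ Bad,
        Relation.ReflTransGen (SepStep T L hL)
          (SepFirst L hL sinit) (SepFirst L hL s)) := by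
  constructor
  · rintro ⟨s, hs, hreach⟩
    refine ⟨s, hs, ?_⟩
    -- from any question state of `s` we can reach the demonic state of `s`
    have toDem : ∀ (s : S) (n i : ℕ) (h : i < (L s).length),
        (L s).length - i ≤ n →
        Relation.ReflTransGen (SepStep T L hL)
          (SepState.question s ((L s).get ⟨i, h⟩)) (SepState.demonic s) := by
      intro s n
      induction n with
      | zero => intro i h hle; omega
      | succ n ih =>
        intro i h hle
        have hmem : (L s).get ⟨i, h⟩ ∈ L s := List.get_mem _ _
        have hstep := SepStep.enable (T := T) (L := L) (hL := hL) s _ hmem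
        have hskip := SepStep.skip (T := T) (L := L) (hL := hL) s _ hmem
        have hidx : (L s).idxOf ((L s).get ⟨i, h⟩) = i :=
          List.get_idxOf (hnodup s) _
        by_cases hc : i + 1 < (L s).length
        · have hnext : SepNext L s ((L s).get ⟨i, h⟩) =
              SepState.question s ((L s).get ⟨i + 1, hc⟩) := by
            simp only [SepNext, hidx, hc, dif_pos]
          rw [hnext] at hskip
          exact Relation.ReflTransGen.head hskip (ih (i + 1) hc (by omega))
        · have hnext : SepNext L s ((L s).get ⟨i, h⟩) = SepState.demonic s := by
            simp only [SepNext, hidx, hc, dif_neg, not_false_iff]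
          rw [hnext] at hskip
          exact Relation.ReflTransGen.single hskip
    have firstToDem : ∀ s : S,
        Relation.ReflTransGen (SepStep T L hL)
          (SepFirst L hL s) (SepState.demonic s) := by
      intro s
      have h0 : 0 < (L s).length := List.length_pos_iff.2 (hL s)
      have : SepFirst L hL s = SepState.question s ((L s).get ⟨0, h0⟩) := by
        simp [SepFirst, List.head_eq_getElem]
      rw [this]
      exact toDem s (L s).length 0 h0 (by omega)
    clear hs
    induction hreach with
    | refl => exact Relation.ReflTransGen.refl
    | @tail u v _ hst ih =>
      obtain ⟨a, ha⟩ := hst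
      exact ih.trans ((firstToDem u).tail (SepStep.demonic u v a ha))
  · rintro ⟨s, hs, hreach⟩
    refine ⟨s, hs, ?_⟩
    set proj : SepState S Act → S := fun x =>
      match x with
      | SepState.question s _ => s
      | SepState.commit s _ => s
      | SepState.demonic s => s with hproj
    have key : ∀ x y, SepStep T L hL x y →
        proj x = proj y ∨ ∃ a, T (proj x) a (proj y) := by
      intro x y hxy
      cases hxy with
      | enable s a ha => left; rfl
      | skip s a ha =>
        left; simp only [SepNext]; split <;> rfl
      | take s a t ha h => right; exact ⟨a, h⟩
      | pass s a ha =>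
        left; simp only [SepNext]; split <;> rfl
      | demonic s t a h => right; exact ⟨a, h⟩
    have main : ∀ x y, Relation.ReflTransGen (SepStep T L hL) x y →
        Relation.ReflTransGen (fun s t => ∃ a, T s a t) (proj x) (proj y) := by
      intro x y hxy
      induction hxy with
      | refl => exact Relation.ReflTransGen.refl
      | tail _ hst ih =>
        rcases key _ _ hst with heq | hT
        · rwa [← heq]
        · exact ih.tail hT
    exact main _ _ hreach
end

section
/- Let (S, T, s_init, Bad) be a labeled transition system over a finite action set Act with Act(s) ≠ ∅ for every s ∈ S, and fix for each s a duplicate-free list L(s) enumerating Act(s). For every finite path ρ' in the action-separated system starting at First(s_init), the sequence s_0, s_1, …, s_m of states of S such that the states of the form First(s_j) occur in ρ' (taken in order of occurrence) is a finite path of the original system starting at s_init; in particular, if First(s) and First(t) occur consecutively among the First-form states of a path, then s → t. -/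
variable {S Act : Type*}

/-- Extracts `s` from states of the form `First(s)`, and `none` otherwise. -/
def firstProj [DecidableEq Act] (L : S → List Act) (hL : ∀ s, L s ≠ []) :
    SepState S Act → Option S :=
  fun x =>
    match x with
    | SepState.question s a => if a = (L s).head (hL s) then some s else none
    | _ => none


/-- The `S`-component of a separated state. -/
def sepOwn : SepState S Act → S
  | SepState.question s _ => s
  | SepState.commit s _ => s
  | SepState.demonic s => s

lemma firstProj_eq_some [DecidableEq Act] (L : S → List Act) (hL : ∀ s, L s ≠ [])
    {x : SepState S Act} {s : S} (h : firstProj L hL x = some s) : s = sepOwn x := by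
  cases x with
  | question u a =>
    simp only [firstProj] at h
    split at h <;> simp_all [sepOwn]
  | commit u a => simp [firstProj] at h
  | demonic u => simp [firstProj] at h

lemma firstProj_sepNext [DecidableEq Act] (L : S → List Act) (hL : ∀ s, L s ≠ [])
    (hnodup : ∀ s, (L s).Nodup) (s : S) (a : Act) :
    firstProj L hL (SepNext L s a) = none := by
  unfold SepNext
  split
  · next h =>
    simp only [firstProj]
    rw [if_neg]
    intro heq
    have hpos : 0 < (L s).length := List.length_pos_iff.mpr (hL s)
    have h0 : (L s).head (hL s) = (L s).get ⟨0, hpos⟩ := by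
      simp [List.head_eq_getElem_zero (hL s)]
    rw [h0] at heq
    have := (List.Nodup.get_inj_iff (hnodup s)).mp heq
    simp at this
  · simp [firstProj]

/-- Classification of a single step: either it stays within the same
original state and does not land on a `First`-form state, or it lands on
`First t` for some `T`-successor `t`. -/
lemma sepStep_classify [DecidableEq Act] {T : S → Act → S → Prop}
    {L : S → List Act} {hL : ∀ s, L s ≠ []} (hnodup : ∀ s, (L s).Nodup)
    {x y : SepState S Act} (h : SepStep T L hL x y) :
    (sepOwn y = sepOwn x ∧ firstProj L hL y = none) ∨
      (firstProj L hL y = some (sepOwn y) ∧ ∃ a, T (sepOwn x) a (sepOwn y)) := by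
  cases h with
  | enable s a ha => left; exact ⟨rfl, rfl⟩
  | skip s a ha =>
    left
    constructor
    · unfold SepNext; split <;> rfl
    · exact firstProj_sepNext L hL hnodup s a
  | take s a t ha h =>
    right
    exact ⟨by simp [firstProj, SepFirst, sepOwn], ⟨a, h⟩⟩
  | pass s a ha =>
    left
    constructor
    · unfold SepNext; split <;> rfl
    · exact firstProj_sepNext L hL hnodup s a
  | demonic s t a h =>
    right
    exact ⟨by simp [firstProj, SepFirst, sepOwn], ⟨a, h⟩⟩

lemma sep_aux [DecidableEq Act] (T : S → Act → S → Prop)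
    (L : S → List Act) (hL : ∀ s, L s ≠ []) (hnodup : ∀ s, (L s).Nodup) :
    ∀ l : List (SepState S Act), l.Chain' (SepStep T L hL) →
      (l.filterMap (firstProj L hL)).Chain' (fun s t => ∃ a, T s a t) ∧
      ∀ x, l.head? = some x → ∀ t,
        (l.filterMap (firstProj L hL)).head? = some t →
        (firstProj L hL x = some t ∨ ∃ a, T (sepOwn x) a t) := by
  intro l
  induction l with
  | nil => intro _; simp; exact List.isChain_nil
  | cons x l' ih =>
    intro hchain
    have hchain' : l'.Chain' (SepStep T L hL) := hchain.tail
    obtain ⟨ihc, ihh⟩ := ih hchain'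
    -- the key head fact about `l'.filterMap`
    have key : ∀ t, (l'.filterMap (firstProj L hL)).head? = some t →
        ∃ a, T (sepOwn x) a t := by
      intro t ht
      cases l' with
      | nil => simp at ht
      | cons y l'' =>
        have hxy : SepStep T L hL x y := (List.isChain_cons_cons.mp hchain).1
        rcases sepStep_classify hnodup hxy with ⟨hown, hnone⟩ | ⟨hsome, a, hT⟩
        · rcases ihh y rfl t ht with h1 | ⟨a, h2⟩
          · rw [hnone] at h1; exact absurd h1 (by simp)
          · exact ⟨a, hown ▸ h2⟩
        · have : (List.filterMap (firstProj L hL) (y :: l'')).head? = some (sepOwn y) := by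
            simp [List.filterMap_cons, hsome]
          rw [this] at ht
          injection ht with ht
          exact ⟨a, ht ▸ hT⟩
    cases hfx : firstProj L hL x with
    | none =>
      refine ⟨by simpa [List.filterMap_cons, hfx] using ihc, ?_⟩
      intro x' hx' t ht
      injection hx' with hx'
      subst hx'
      right
      exact key t (by simpa [List.filterMap_cons, hfx] using ht)
    | some s =>
      have hs : s = sepOwn x := firstProj_eq_some L hL hfx
      constructor
      · rw [List.filterMap_cons, hfx]
        refine List.isChain_cons.mpr ⟨?_, ihc⟩
        intro t ht
        exact hs ▸ key t (by simpa using ht)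
      · intro x' hx' t ht
        injection hx' with hx'
        subst hx'
        left
        simp only [List.filterMap_cons, hfx, List.head?_cons] at ht
        injection ht with ht
        rw [hfx, ht]

/-- **Projection of paths of the action-separated system.** For every finite
path of the action-separated system starting at `First(s_init)`, the sequence
of states `s` such that `First(s)` occurs on the path (in order of occurrence)
is a finite path of the original system starting at `s_init`; in particular,
consecutive `First`-form states `First(s)`, `First(t)` satisfy `s → t`. -/
theorem action_separation_projection [Fintype Act] [DecidableEq Act]
    (T : S → Act → S → Prop) (L : S → List Act) (hL : ∀ s, L s ≠ [])
    (hnodup : ∀ s, (L s).Nodup)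
    (henum : ∀ s a, a ∈ L s ↔ ∃ t, T s a t)
    (sinit : S) (l : List (SepState S Act))
    (hchain : l.Chain' (SepStep T L hL))
    (hhead : l.head? = some (SepFirst L hL sinit)) :
    (l.filterMap (firstProj L hL)).Chain' (fun s t => ∃ a, T s a t) ∧
      (l.filterMap (firstProj L hL)).head? = some sinit := by
  obtain ⟨hc, _⟩ := sep_aux T L hL hnodup l hchain
  refine ⟨hc, ?_⟩
  cases l with
  | nil => simp at hhead
  | cons x l' =>
    injection hhead with hhead
    subst hhead
    simp [List.filterMap_cons, firstProj, SepFirst]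
end

section
/- Let A be a finite set of players, γ : 2^A → {0, 1} a function, and define the dual game γ^d : 2^A → {0, 1} by γ^d(C) = 1 − γ(A \ C). Then for every player a ∈ A, the Shapley values coincide: Φ_{γ^d}(a) = Φ_γ(a). (This underlies the fact that forward responsibility is the same for a safety property and its dual reachability property.) -/
/-! The map `C ↦ (A \ {a}) \ C` is an involution of the coalitions not containing `a`.
It sends a coalition of size `k` to one of size `|A| - 1 - k`, which carries the same Shapley
weight, and it turns the marginal contribution of `a` in the dual game into its marginal
contribution in `γ`: `γᵈ(C ∪ {a}) - γᵈ(C) = γ(A \ C) - γ(A \ (C ∪ {a}))`. -/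

open Finset

/-- The Shapley value of player `a` in the cooperative game `γ` on the
player set `ι`:
`Φ_γ(a) = Σ_{C ⊆ A \ {a}} ((|A| − |C| − 1)! · |C|! / |A|!) · (γ(C ∪ {a}) − γ(C))`. -/
noncomputable def shapley {ι : Type*} [Fintype ι] [DecidableEq ι]
    (γ : Finset ι → ℝ) (a : ι) : ℝ :=
  ∑ C ∈ (Finset.univ.erase a).powerset,
    ((Nat.factorial (Fintype.card ι - C.card - 1) * Nat.factorial C.card : ℝ) /
        (Nat.factorial (Fintype.card ι) : ℝ)) *
      (γ (insert a C) - γ C)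

theorem sum_powerset_sdiff {α M : Type*} [DecidableEq α] [AddCommMonoid M]
    (s : Finset α) (f : Finset α → M) :
    ∑ C ∈ s.powerset, f (s \ C) = ∑ C ∈ s.powerset, f C :=
  sum_nbij' (s \ ·) (s \ ·) (by simp) (by simp)
    (fun _ hC => Finset.sdiff_sdiff_eq_self (mem_powerset.1 hC))
    (fun _ hC => Finset.sdiff_sdiff_eq_self (mem_powerset.1 hC)) (fun _ _ => rfl)

theorem factorial_sub_sub_mul_factorial_sub {n k : ℕ} (hk : k ≤ n - 1) :
    (n - (n - 1 - k) - 1).factorial * (n - 1 - k).factorial =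
      (n - k - 1).factorial * k.factorial := by
  rw [show n - (n - 1 - k) - 1 = k by omega, show n - 1 - k = n - k - 1 by omega, mul_comm]

section

variable {ι : Type*} [Fintype ι] [DecidableEq ι]

noncomputable def dualGame (γ : Finset ι → ℝ) (C : Finset ι) : ℝ :=
  1 - γ (univ \ C)

theorem dualGame_insert_sub_dualGame (γ : Finset ι → ℝ) {a : ι} {C : Finset ι} (ha : a ∉ C) :
    dualGame γ (insert a C) - dualGame γ C =
      γ (insert a (univ.erase a \ C)) - γ (univ.erase a \ C) := by
  have hcompl : univ \ C = insert a (univ.erase a \ C) := by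
    rw [erase_sdiff_comm, insert_erase (mem_sdiff.2 ⟨mem_univ a, ha⟩)]
  rw [dualGame, dualGame, sdiff_insert, ← erase_sdiff_comm, hcompl]
  ring

theorem shapley_dualGame (γ : Finset ι → ℝ) (a : ι) : shapley (dualGame γ) a = shapley γ a := by
  unfold shapley
  conv_rhs => rw [← sum_powerset_sdiff]
  refine sum_congr rfl fun C hCmem => ?_
  have hC : C ⊆ univ.erase a := mem_powerset.1 hCmem
  have hcard : C.card ≤ Fintype.card ι - 1 := by
    simpa [card_erase_of_mem] using card_le_card hC
  rw [dualGame_insert_sub_dualGame γ fun h => (mem_erase.1 (hC h)).1 rfl, card_sdiff_of_subset hC,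
    card_erase_of_mem (mem_univ a), card_univ]
  congr 2
  exact_mod_cast (factorial_sub_sub_mul_factorial_sub hcard).symm

end

theorem shapley_dual_general {ι : Type*} [Fintype ι] [DecidableEq ι]
    (γ : Finset ι → ℝ) (a : ι) :
    shapley (fun C => 1 - γ (Finset.univ \ C)) a = shapley γ a :=
  shapley_dualGame γ a

/-- **Self-duality of the Shapley value.** For any `{0,1}`-valued game `γ` and
its dual game `γᵈ(C) = 1 − γ(A \ C)`, every player has the same Shapley value
in `γᵈ` as in `γ`. (This underlies the fact that forward responsibility is the
same for a safety property and its dual reachability property.) -/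
theorem shapley_dual {ι : Type*} [Fintype ι] [DecidableEq ι]
    (γ : Finset ι → ℝ) (h01 : ∀ C, γ C = 0 ∨ γ C = 1) (a : ι) :
    shapley (fun C => 1 - γ (Finset.univ \ C)) a = shapley γ a :=
  shapley_dual_general γ a
end

section
/- Let (S, →, s_init, Bad) be a transition system with → serial and all states of Bad absorbing (their only transitions are self-loops), let τ = τ_0 … τ_k be a loop-free counterexample (a finite →-path with τ_0 = s_init and τ_k ∈ Bad), and let Aux ⊆ S. For a coalition C ⊆ S disjoint from Aux, let GameBw(C) be the backward safety game with Safe-controlled states C ∪ Aux and the engraved transition relation →_C. Then the backward cooperative game is monotone: for all coalitions C_1 ⊆ C_2 ⊆ S disjoint from Aux, if player Safe has a winning strategy in GameBw(C_1), then player Safe has a winning strategy in GameBw(C_2). -/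
/-!
Safe in `GameBw(C₂)` keeps playing the winning strategy of `GameBw(C₁)` on `C₁ ∪ Aux`, and on the
newly controlled states plays a move that the engraved relation of `GameBw(C₁)` also allows
(the next state of `τ` on the counterexample, any successor elsewhere). Every play of the new
game is then a play of the old game consistent with the old strategy, so it avoids `Bad`.
-/

/-- Player Safe has a winning strategy in the safety game on state set `S`
with Safe-controlled states `P`, transition relation `R`, initial state
`sinit` and bad states `Bad`. -/
def SafeWins {S : Type*} (P : Set S) (R : S → S → Prop)
    (sinit : S) (Bad : Set S) : Prop :=
  ∃ σ : S → S, (∀ s ∈ P, R s (σ s)) ∧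
    ∀ ρ : ℕ → S, ρ 0 = sinit →
      (∀ i, (ρ i ∈ P → ρ (i + 1) = σ (ρ i)) ∧ (ρ i ∉ P → R (ρ i) (ρ (i + 1)))) →
      ∀ i, ρ i ∉ Bad

/-- The engraved transition relation of the backward game for a counterexample
`τ = τ_0 … τ_k` and a set `P` (= coalition ∪ auxiliary states):
for each `i < k` with `τ_i ∉ P`, the only transition from `τ_i` is
`τ_i → τ_{i+1}`; every other state keeps its transitions from `step`. -/
def engraved {S : Type*} (step : S → S → Prop) (τ : ℕ → S) (k : ℕ)
    (P : Set S) : S → S → Prop :=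
  fun s t =>
    ((∃ i, i < k ∧ τ i = s) ∧ s ∉ P ∧ ∃ i, i < k ∧ τ i = s ∧ τ (i + 1) = t) ∨
    ((¬ (∃ i, i < k ∧ τ i = s) ∨ s ∈ P) ∧ step s t)

theorem SafeWins.mono {S : Type*} {P₁ P₂ : Set S} {R₁ R₂ : S → S → Prop} {sinit : S}
    {Bad : Set S} (hP : P₁ ⊆ P₂) (hkept : ∀ s ∈ P₁, ∀ t, R₁ s t → R₂ s t)
    (hnew : ∀ s ∈ P₂, s ∉ P₁ → ∃ t, R₁ s t ∧ R₂ s t)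
    (hout : ∀ s ∉ P₂, ∀ t, R₂ s t → R₁ s t) (h : SafeWins P₁ R₁ sinit Bad) :
    SafeWins P₂ R₂ sinit Bad := by
  classical
  obtain ⟨σ, hσ, hwin⟩ := h
  choose f hf using hnew
  let σ' : S → S := fun s =>
    if h₁ : s ∈ P₁ then σ s else if h₂ : s ∈ P₂ then f s h₂ h₁ else σ s
  refine ⟨σ', fun s hs => ?_, fun ρ hρ0 hρ => hwin ρ hρ0 fun i => ⟨fun h₁ => ?_, fun h₁ => ?_⟩⟩
  · by_cases h₁ : s ∈ P₁
    · simpa [σ', h₁] using hkept s h₁ _ (hσ s h₁)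
    · simpa [σ', h₁, hs] using (hf s hs h₁).2
  · simpa [σ', h₁] using (hρ i).1 (hP h₁)
  · by_cases h₂ : ρ i ∈ P₂
    · simpa [σ', h₁, h₂, (hρ i).1 h₂] using (hf _ h₂ h₁).1
    · exact hout _ h₂ _ ((hρ i).2 h₂)

section Engraved

variable {S : Type*} {step : S → S → Prop} {τ : ℕ → S} {k : ℕ} {P Q : Set S} {s t : S}

theorem engraved_iff_of_mem (hs : s ∈ P) : engraved step τ k P s t ↔ step s t := by
  simp [engraved, hs]

theorem engraved_congr_of_notMem (hP : s ∉ P) (hQ : s ∉ Q) :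
    engraved step τ k P s t ↔ engraved step τ k Q s t := by
  simp [engraved, hP, hQ]

theorem exists_engraved_and_step (hser : ∀ s, ∃ t, step s t)
    (hτpath : ∀ i, i < k → step (τ i) (τ (i + 1))) (P : Set S) (s : S) :
    ∃ t, engraved step τ k P s t ∧ step s t := by
  by_cases hs : s ∈ P
  · obtain ⟨t, ht⟩ := hser s
    exact ⟨t, (engraved_iff_of_mem hs).2 ht, ht⟩
  by_cases hτs : ∃ i, i < k ∧ τ i = s
  · obtain ⟨i, hik, rfl⟩ := hτs
    exact ⟨τ (i + 1), Or.inl ⟨⟨i, hik, rfl⟩, hs, i, hik, rfl, rfl⟩, hτpath i hik⟩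
  · obtain ⟨t, ht⟩ := hser s
    exact ⟨t, Or.inr ⟨Or.inl hτs, ht⟩, ht⟩

end Engraved

theorem backward_game_monotone_general {S : Type*}
    (step : S → S → Prop) (hser : ∀ s, ∃ t, step s t)
    (sinit : S) (Bad : Set S)
    (τ : ℕ → S) (k : ℕ)
    (hτpath : ∀ i, i < k → step (τ i) (τ (i + 1)))
    (Aux C₁ C₂ : Set S)
    (hC : C₁ ⊆ C₂)
    (h : SafeWins (C₁ ∪ Aux) (engraved step τ k (C₁ ∪ Aux)) sinit Bad) :
    SafeWins (C₂ ∪ Aux) (engraved step τ k (C₂ ∪ Aux)) sinit Bad := by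
  have hP : C₁ ∪ Aux ⊆ C₂ ∪ Aux := Set.union_subset_union_left Aux hC
  refine h.mono hP (fun s hs t ht => ?_) (fun s hs₂ _ => ?_) (fun s hs₂ t => ?_)
  · exact (engraved_iff_of_mem (hP hs)).2 ((engraved_iff_of_mem hs).1 ht)
  · obtain ⟨t, ht, hst⟩ := exists_engraved_and_step hser hτpath (C₁ ∪ Aux) s
    exact ⟨t, ht, (engraved_iff_of_mem hs₂).2 hst⟩
  · exact (engraved_congr_of_notMem hs₂ fun hs₁ => hs₂ (hP hs₁)).1

/-- **Monotonicity of the backward cooperative game.** Let `(S, →, s_init, Bad)`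
be a transition system with `→` serial and all bad states absorbing, let
`τ = τ_0 … τ_k` be a loop-free counterexample and `Aux ⊆ S`. For coalitions
`C₁ ⊆ C₂` disjoint from `Aux`: if Safe wins the backward game `GameBw(C₁)`,
then Safe wins the backward game `GameBw(C₂)`. -/
theorem backward_game_monotone {S : Type*}
    (step : S → S → Prop) (hser : ∀ s, ∃ t, step s t)
    (sinit : S) (Bad : Set S)
    (habs : ∀ s ∈ Bad, ∀ t, step s t ↔ t = s)
    (τ : ℕ → S) (k : ℕ)
    (hτ0 : τ 0 = sinit)
    (hτpath : ∀ i, i < k → step (τ i) (τ (i + 1)))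
    (hτbad : τ k ∈ Bad)
    (hτnodup : ∀ i j, i ≤ k → j ≤ k → τ i = τ j → i = j)
    (Aux C₁ C₂ : Set S)
    (hd₁ : C₁ ∩ Aux = ∅) (hd₂ : C₂ ∩ Aux = ∅) (hC : C₁ ⊆ C₂)
    (h : SafeWins (C₁ ∪ Aux) (engraved step τ k (C₁ ∪ Aux)) sinit Bad) :
    SafeWins (C₂ ∪ Aux) (engraved step τ k (C₂ ∪ Aux)) sinit Bad :=
  backward_game_monotone_general step hser sinit Bad τ k hτpath Aux C₁ C₂ hC h
end
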